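/- If F₁ and F₂ are hedges formed for Q[S] in G, then F₁ ∪ F₂ is a hedge formed for Q[S] in G. -/

import Mathlib

/-- A semi-Markovian graph on vertex type `V`: a DAG of directed edges together with a
symmetric irreflexive relation of bidirected edges. `dir x y` means there is a directed
edge from `x` to `y`, i.e. `x` is a parent of `y`. -/
structure SemiMarkovian (V : Type*) where
  dir : V → V → Prop
  bid : V → V → Prop
  bid_symm : ∀ x y, bid x y → bid y x
  bid_irrefl : ∀ x, ¬ bid x x
  acyclic : ∀ x, ¬ Relation.TransGen dir x x

namespace SemiMarkovian

variable {V : Type*}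

/-- The induced subgraph of `G` on the vertex set `W`. -/
def induce (G : SemiMarkovian V) (W : Set V) : SemiMarkovian V where
  dir a b := a ∈ W ∧ b ∈ W ∧ G.dir a b
  bid a b := a ∈ W ∧ b ∈ W ∧ G.bid a b
  bid_symm := fun x y h => ⟨h.2.1, h.1, G.bid_symm x y h.2.2⟩
  bid_irrefl := fun x h => G.bid_irrefl x h.2.2
  acyclic := fun x h =>
    G.acyclic x (Relation.TransGen.mono (fun _ _ hab => hab.2.2) _ _ h)

/-- There is a directed path (possibly of length zero) from `x` to `y` all of whose
vertices lie in `F`. -/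
def DirPathIn (G : SemiMarkovian V) (F : Set V) (x y : V) : Prop :=
  x ∈ F ∧ Relation.ReflTransGen (fun a b => b ∈ F ∧ G.dir a b) x y

/-- `x` and `y` are joined by a path of bidirected edges all of whose vertices lie in `F`. -/
def BidConnIn (G : SemiMarkovian V) (F : Set V) (x y : V) : Prop :=
  x ∈ F ∧ Relation.ReflTransGen (fun a b => b ∈ F ∧ G.bid a b) x y

/-- `x` is an ancestor of the set `S` in `G[F]`. -/
def AncestorIn (G : SemiMarkovian V) (F S : Set V) (x : V) : Prop :=
  ∃ s ∈ S, G.DirPathIn F x s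

/-- `G[F]` is a c-component: any two vertices of `F` are joined by a path of bidirected
edges all of whose vertices lie in `F`. -/
def CComponent (G : SemiMarkovian V) (F : Set V) : Prop :=
  ∀ x ∈ F, ∀ y ∈ F, G.BidConnIn F x y

/-- `F` is a hedge formed for `Q[S]` in `G`: `S ⊊ F`, every vertex of `F` is an ancestor of
`S` in `G[F]`, and `G[F]` is a c-component. -/
def IsHedge (G : SemiMarkovian V) (S F : Set V) : Prop :=
  S ⊂ F ∧ (∀ x ∈ F, G.AncestorIn F S x) ∧ G.CComponent F

/-- The hedge hull of `S` in `G`: the union of `S` with all hedges formed for `Q[S]` in `G`. -/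
def Hhull (G : SemiMarkovian V) (S : Set V) : Set V :=
  S ∪ ⋃₀ {F | G.IsHedge S F}

/-- Vertices outside `S` that are parents of some vertex of `S`. -/
def Pa (G : SemiMarkovian V) (S : Set V) : Set V :=
  {x | x ∉ S ∧ ∃ s ∈ S, G.dir x s}

/-- Vertices outside `S` that have a bidirected edge to some vertex of `S`. -/
def Bid (G : SemiMarkovian V) (S : Set V) : Set V :=
  {x | x ∉ S ∧ ∃ s ∈ S, G.bid x s}

/-- `Pa↔(S) := Pa(S) ∩ Bid(S)`. -/
def PaBid (G : SemiMarkovian V) (S : Set V) : Set V := G.Pa S ∩ G.Bid S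

end SemiMarkovian

lemma bidconn_mono {V : Type*} (G : SemiMarkovian V) {F F' : Set V} (h : F ⊆ F') {x y : V}
    (hp : G.BidConnIn F x y) : G.BidConnIn F' x y :=
  ⟨h hp.1, Relation.ReflTransGen.mono (fun _ _ hb => ⟨h hb.1, hb.2⟩) _ _ hp.2⟩

lemma dirpath_mono {V : Type*} (G : SemiMarkovian V) {F F' : Set V} (h : F ⊆ F') {x y : V}
    (hp : G.DirPathIn F x y) : G.DirPathIn F' x y :=
  ⟨h hp.1, Relation.ReflTransGen.mono (fun _ _ hb => ⟨h hb.1, hb.2⟩) _ _ hp.2⟩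

/-- If `F₁` and `F₂` are hedges formed for `Q[S]` in `G`, then so is `F₁ ∪ F₂`. -/
theorem hedge_union {V : Type*} [Fintype V] (G : SemiMarkovian V) (S F₁ F₂ : Set V)
    (hS : G.CComponent S) (h1 : G.IsHedge S F₁) (h2 : G.IsHedge S F₂) :
    G.IsHedge S (F₁ ∪ F₂) := by

  obtain ⟨hss1, hanc1, hcc1⟩ := h1
  obtain ⟨hss2, hanc2, hcc2⟩ := h2
  -- S is nonempty
  obtain ⟨x0, hx0F, _⟩ := Set.exists_of_ssubset hss1
  obtain ⟨s0, hs0S, _⟩ := hanc1 x0 hx0F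
  refine ⟨lt_of_lt_of_le hss1 Set.subset_union_left, ?_, ?_⟩
  · rintro x (hx | hx)
    · obtain ⟨s, hs, hp⟩ := hanc1 x hx
      exact ⟨s, hs, dirpath_mono G Set.subset_union_left hp⟩
    · obtain ⟨s, hs, hp⟩ := hanc2 x hx
      exact ⟨s, hs, dirpath_mono G Set.subset_union_right hp⟩
  · have key : ∀ x ∈ F₁ ∪ F₂, G.BidConnIn (F₁ ∪ F₂) x s0 ∧ G.BidConnIn (F₁ ∪ F₂) s0 x := by
      rintro x (hx | hx)
      · exact ⟨bidconn_mono G Set.subset_union_left (hcc1 x hx s0 (hss1.1 hs0S)),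
          bidconn_mono G Set.subset_union_left (hcc1 s0 (hss1.1 hs0S) x hx)⟩
      · exact ⟨bidconn_mono G Set.subset_union_right (hcc2 x hx s0 (hss2.1 hs0S)),
          bidconn_mono G Set.subset_union_right (hcc2 s0 (hss2.1 hs0S) x hx)⟩
    intro x hx y hy
    obtain ⟨h1, _⟩ := key x hx
    obtain ⟨_, h2⟩ := key y hy
    exact ⟨h1.1, h1.2.trans h2.2⟩
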